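/- As ε → 0, the lowest band function of the stanene lattice λ₁(εω) = 1 − |b(εω)|/4 − √(|b(εω)|² + 4)/4, where b(θ) = (1 + e^{iθ₁} + e^{iθ₂})/2, satisfies λ₁(εω) = (ε²/15)(ω₁² + ω₂² − ω₁ω₂) + O(ε³) for ω = (ω₁,ω₂) on the unit circle. -/

import Mathlib

/-!
Writing `θ = (x, y)`, one has `|b(θ)|² = (3 + 2 cos x + 2 cos y + 2 cos (x - y)) / 4`, so the
second-order Taylor bound for cosine gives `|b(θ)|² = 9/4 - q(θ)/2 + O(|θ|⁴)` with
`q(θ) = x² + y² - xy`. Both square roots in `λ₁` are then expanded to first order around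
`√(9/4) = 3/2` and `√(25/4) = 5/2`, using `|√s - a| ≤ |s - a²| / a`; the linear terms combine to
`q(θ) (1/6 + 1/10) / 4 = q(θ) / 15`. Finally `q(εω) = ε² q(ω)` and the `O(ε⁴)` error is `O(ε³)`.
-/

open Real

lemma norm_one_add_exp_add_exp_div_two_sq (x y : ℝ) :
    ‖(1 + Complex.exp (Complex.I * x) + Complex.exp (Complex.I * y)) / 2‖ ^ 2
      = (3 + 2 * cos x + 2 * cos y + 2 * cos (x - y)) / 4 := by
  simp only [Complex.sq_norm, mul_comm Complex.I, Complex.exp_mul_I, Complex.normSq_apply]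
  simp [Complex.cos_ofReal_re, Complex.sin_ofReal_re, cos_sub]
  nlinarith [sin_sq_add_cos_sq x, sin_sq_add_cos_sq y]

lemma abs_cos_add_cos_add_cos_sub_le {x y : ℝ} (hx : |x| ≤ 1) (hy : |y| ≤ 1)
    (hxy : |x - y| ≤ 1) :
    |(3 + 2 * cos x + 2 * cos y + 2 * cos (x - y)) / 4 - (9 / 4 - (x ^ 2 + y ^ 2 - x * y) / 2)|
      ≤ (x ^ 4 + y ^ 4 + (x - y) ^ 4) / 32 := by
  have hx' := cos_bound hx
  have hy' := cos_bound hy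
  have hxy' := cos_bound hxy
  simp only [Even.pow_abs (by decide : Even 4)] at hx' hy' hxy'
  rw [abs_le] at *
  constructor <;> nlinarith [pow_two_nonneg (x ^ 2), pow_two_nonneg (y ^ 2),
    pow_two_nonneg ((x - y) ^ 2)]

lemma abs_sqrt_sub_le_div {s a : ℝ} (hs : 0 ≤ s) (ha : 0 < a) : |√s - a| ≤ |s - a ^ 2| / a := by
  have hsum : 0 < √s + a := by positivity
  have hfactor : |s - a ^ 2| = |√s - a| * (√s + a) := by
    rw [← abs_of_pos hsum, ← abs_mul]
    congr 1
    linear_combination (sq_sqrt hs).symm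
  rw [le_div_iff₀ ha, hfactor]
  gcongr
  exact le_add_of_nonneg_left (sqrt_nonneg s)

lemma abs_band_sub_le {r t η : ℝ} (hr : 0 ≤ r) (ht : t ≤ 3) (h : |r ^ 2 - (9 / 4 - t / 2)| ≤ η) :
    |(1 - r / 4 - √(r ^ 2 + 4) / 4) - t / 15| ≤ η / 2 + t ^ 2 / 100 := by
  have h₁ := (abs_sqrt_sub_le_div (sq_nonneg r) (by linarith : 0 < 3 / 2 - t / 6)).trans
    (div_le_self (abs_nonneg _) (by linarith))
  have h₂ := (abs_sqrt_sub_le_div (by positivity : 0 ≤ r ^ 2 + 4)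
    (by linarith : 0 < 5 / 2 - t / 10)).trans (div_le_self (abs_nonneg _) (by linarith))
  have e₁ : |r ^ 2 - (3 / 2 - t / 6) ^ 2| ≤ η + t ^ 2 / 36 := by
    rw [abs_le] at h ⊢; constructor <;> nlinarith [sq_nonneg t]
  have e₂ : |r ^ 2 + 4 - (5 / 2 - t / 10) ^ 2| ≤ η + t ^ 2 / 100 := by
    rw [abs_le] at h ⊢; constructor <;> nlinarith [sq_nonneg t]
  rw [sqrt_sq hr] at h₁
  rw [abs_le] at h₁ h₂ ⊢
  constructor <;> nlinarith [sq_nonneg t]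

lemma abs_band_sub_quadratic_le {x y : ℝ} (hx : |x| ≤ 1) (hy : |y| ≤ 1) (hxy : |x - y| ≤ 1) :
    let b : ℂ := (1 + Complex.exp (Complex.I * x) + Complex.exp (Complex.I * y)) / 2
    |(1 - ‖b‖ / 4 - √(‖b‖ ^ 2 + 4) / 4) - (x ^ 2 + y ^ 2 - x * y) / 15|
      ≤ (x ^ 4 + y ^ 4 + (x - y) ^ 4) / 64 + (x ^ 2 + y ^ 2 - x * y) ^ 2 / 100 := by
  intro b
  have hq : x ^ 2 + y ^ 2 - x * y ≤ 3 := by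
    rw [← sq_le_one_iff_abs_le_one] at hx hy hxy
    nlinarith
  have hb := norm_one_add_exp_add_exp_div_two_sq x y ▸ abs_cos_add_cos_add_cos_sub_le hx hy hxy
  exact (abs_band_sub_le (norm_nonneg b) hq hb).trans_eq (by ring)

/-- As ε → 0, the lowest stanene band function
λ₁(θ) = 1 − |b(θ)|/4 − √(|b(θ)|² + 4)/4, with b(θ) = (1 + e^{iθ₁} + e^{iθ₂})/2,
satisfies λ₁(εω) = (ε²/15)(ω₁² + ω₂² − ω₁ω₂) + O(ε³) uniformly for ω on the unit circle. -/
theorem stanene_effective_form_expansion :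
    ∃ C > (0:ℝ), ∃ δ > (0:ℝ), ∀ ω₁ ω₂ : ℝ, ω₁ ^ 2 + ω₂ ^ 2 = 1 →
      ∀ ε : ℝ, |ε| < δ →
        let b : ℂ := (1 + Complex.exp (Complex.I * (ε * ω₁))
          + Complex.exp (Complex.I * (ε * ω₂))) / 2
        |(1 - ‖b‖ / 4 - Real.sqrt (‖b‖ ^ 2 + 4) / 4)
          - ε ^ 2 / 15 * (ω₁ ^ 2 + ω₂ ^ 2 - ω₁ * ω₂)| ≤ C * |ε| ^ 3 := by
  refine ⟨1, one_pos, 1 / 2, by norm_num, fun ω₁ ω₂ hω ε hε => ?_⟩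
  have hε2 : ε ^ 2 ≤ 1 / 4 := by
    rw [← sq_abs]; nlinarith [abs_nonneg ε]
  have hω₁ : ω₁ ^ 2 ≤ 1 := by nlinarith
  have hω₂ : ω₂ ^ 2 ≤ 1 := by nlinarith
  have hω₁₂ : (ω₁ - ω₂) ^ 2 ≤ 2 := by nlinarith [sq_nonneg (ω₁ + ω₂)]
  have hexpansion := abs_band_sub_quadratic_le (x := ε * ω₁) (y := ε * ω₂)
    (sq_le_one_iff_abs_le_one _ |>.mp (by nlinarith))
    (sq_le_one_iff_abs_le_one _ |>.mp (by nlinarith))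
    (sq_le_one_iff_abs_le_one _ |>.mp (by nlinarith))
  push_cast at hexpansion
  intro b
  have hscale : ((ε * ω₁) ^ 2 + (ε * ω₂) ^ 2 - ε * ω₁ * (ε * ω₂)) / 15
      = ε ^ 2 / 15 * (ω₁ ^ 2 + ω₂ ^ 2 - ω₁ * ω₂) := by ring
  have hcoeff : (ω₁ ^ 4 + ω₂ ^ 4 + (ω₁ - ω₂) ^ 4) / 64 + (ω₁ ^ 2 + ω₂ ^ 2 - ω₁ * ω₂) ^ 2 / 100
      ≤ 1 := by nlinarith
  have hε4 : ε ^ 4 ≤ |ε| ^ 3 := by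
    rw [← Even.pow_abs (by decide : Even 4), pow_succ]
    nlinarith [pow_nonneg (abs_nonneg ε) 3]
  calc _ ≤ _ := hscale ▸ hexpansion
    _ = ε ^ 4 * ((ω₁ ^ 4 + ω₂ ^ 4 + (ω₁ - ω₂) ^ 4) / 64
          + (ω₁ ^ 2 + ω₂ ^ 2 - ω₁ * ω₂) ^ 2 / 100) := by ring
    _ ≤ ε ^ 4 * 1 := mul_le_mul_of_nonneg_left hcoeff (by positivity)
    _ ≤ 1 * |ε| ^ 3 := by linarith
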